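/- arXiv:2301.07003 — 6 statements merged into one kernel-verified Lean document; each statement's English description precedes it below -/
import Mathlib

section
/- Let T : M_n → M_n be a positive trace-preserving linear map, V ⊆ ℂⁿ a subspace, and Λ = Λ_{T,V} the induced QMC on M_n ⊕ M_n. Then for every X ∈ M_n and every integer r ≥ 1, the first component of Λ(ℚ₁Λ)^{r−1}(0,X) has trace equal to Tr(ℙ T (ℚT)^{r−1} X). Consequently, for every unit vector φ ∈ V^⊥, the mean hitting time of the QMC Λ from vertex 2 (with initial internal state ρ_φ) to vertex 1, namely Σ_{r≥1} r·Tr(ℙ₁Λ(ℚ₁Λ)^{r−1}(0,ρ_φ)), equals the mean hitting time τ(φ→V) = Σ_{r≥1} r·Tr(ℙT(ℚT)^{r−1}ρ_φ) of the channel T to the subspace V. -/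
open Matrix
open scoped ComplexOrder

noncomputable section

/-- The algebra of `n × n` complex matrices. -/
abbrev Mn (n : ℕ) : Type := Matrix (Fin n) (Fin n) ℂ

/-- The map `X ↦ Q X Q`. -/
def sandwich {n : ℕ} (Q : Mn n) : Module.End ℂ (Mn n) :=
  (LinearMap.mulLeft ℂ Q).comp (LinearMap.mulRight ℂ Q)

/-- The sum of the two components of a pair. -/
def sumPair (n : ℕ) : (Mn n × Mn n) →ₗ[ℂ] Mn n :=
  LinearMap.fst ℂ (Mn n) (Mn n) + LinearMap.snd ℂ (Mn n) (Mn n)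

/-- The QMC `Λ_{T,V}` induced by the channel `T` and the subspace `V` (with orthogonal
projection `P` onto `V` and `Q = I − P`):
`Λ(X₁,X₂) = ((I−ℚ)(T(X₁+X₂)), ℚ(T(X₁+X₂)))` where `ℚ(Y) = QYQ`. -/
def Lam {n : ℕ} (T : Module.End ℂ (Mn n)) (Q : Mn n) : Module.End ℂ (Mn n × Mn n) :=
  LinearMap.prod
    (((1 : Module.End ℂ (Mn n)) - sandwich Q) ∘ₗ (T ∘ₗ sumPair n))
    ((sandwich Q) ∘ₗ (T ∘ₗ sumPair n))

/-- `ℙ₁(X₁,X₂) = (X₁,0)`. -/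
def proj1 (n : ℕ) : Module.End ℂ (Mn n × Mn n) :=
  (LinearMap.inl ℂ (Mn n) (Mn n)).comp (LinearMap.fst ℂ (Mn n) (Mn n))

/-- `ℙ₂(X₁,X₂) = (0,X₂)`. -/
def proj2 (n : ℕ) : Module.End ℂ (Mn n × Mn n) :=
  (LinearMap.inr ℂ (Mn n) (Mn n)).comp (LinearMap.snd ℂ (Mn n) (Mn n))

/-- The block-diagonal part `S_d = diag(S₁₁,S₂₂)` of a map on `M_n ⊕ M_n`. -/
def diagPart {n : ℕ} (S : Module.End ℂ (Mn n × Mn n)) : Module.End ℂ (Mn n × Mn n) :=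
  proj1 n * S * proj1 n + proj2 n * S * proj2 n

/-- The map `E(X₁,X₂) = (X₁+X₂, X₁+X₂)`. -/
def Emap (n : ℕ) : Module.End ℂ (Mn n × Mn n) :=
  LinearMap.prod (sumPair n) (sumPair n)

/-- The map `Θ_W(X₁,X₂) = Tr(X₁+X₂)·W`. -/
def Theta {n : ℕ} (W : Mn n × Mn n) : Module.End ℂ (Mn n × Mn n) :=
  ((Matrix.traceLinearMap (Fin n) ℂ ℂ) ∘ₗ sumPair n).smulRight W

/-- The mean hitting time `τ(ρ → V) = Σ_{r ≥ 1} r·Tr(ℙT(ℚT)^{r−1} ρ)`. -/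
def tau {n : ℕ} (T : Module.End ℂ (Mn n)) (P Q : Mn n) (ρ : Mn n) : ℂ :=
  ∑' r : ℕ, ((r : ℂ) + 1) * ((sandwich P * T * (sandwich Q * T) ^ r) ρ).trace

/-- The pure state `ρ_φ = |φ⟩⟨φ|`. -/
def rhoOf {n : ℕ} (φ : Fin n → ℂ) : Mn n := Matrix.vecMulVec φ (star φ)

/-- A positive map on `M_n`. -/
def IsPosMap {n : ℕ} (T : Module.End ℂ (Mn n)) : Prop :=
  ∀ X : Mn n, X.PosSemidef → (T X).PosSemidef

/-- A trace-preserving map on `M_n`. -/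
def IsTracePreserving {n : ℕ} (T : Module.End ℂ (Mn n)) : Prop :=
  ∀ X : Mn n, (T X).trace = X.trace

/-- A quantum channel: a completely positive trace-preserving map, given by a Kraus
decomposition `T(X) = Σᵢ Vᵢ X Vᵢ*` with `Σᵢ Vᵢ* Vᵢ = I`. -/
def IsChannel {n : ℕ} (T : Module.End ℂ (Mn n)) : Prop :=
  ∃ (k : ℕ) (V : Fin k → Mn n),
    (∀ X : Mn n, T X = ∑ i, V i * X * (V i)ᴴ) ∧ (∑ i, (V i)ᴴ * V i = 1)

/-- Irreducibility of a positive map on `M_n`: the only orthogonal projections `P` with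
`T(P M_n P) ⊆ P M_n P` are `P = 0` and `P = I`. -/
def IsIrreducibleMap {n : ℕ} (T : Module.End ℂ (Mn n)) : Prop :=
  ∀ P : Mn n, P.IsHermitian → P * P = P →
    (∀ X : Mn n, ∃ Y : Mn n, T (P * X * P) = P * Y * P) → P = 0 ∨ P = 1

lemma iter_aux {n : ℕ} (T : Module.End ℂ (Mn n)) (Q : Mn n) (X : Mn n) (r : ℕ) :
    ((((1 : Module.End ℂ (Mn n × Mn n)) - proj1 n) * Lam T Q) ^ r) ((0 : Mn n), X)
      = ((0 : Mn n), ((sandwich Q * T) ^ r) X) := by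
  induction r with
  | zero => simp
  | succ r ih =>
    rw [pow_succ', Module.End.mul_apply, ih]
    rw [pow_succ', Module.End.mul_apply]
    simp [Lam, proj1, sandwich, sumPair, Module.End.mul_apply, Prod.ext_iff, mul_assoc]

/-- For a positive trace-preserving `T` and a subspace `V` (projection `P`,
`Q = I − P`), the first component of `Λ(ℚ₁Λ)^{r−1}(0,X)` has trace `Tr(ℙT(ℚT)^{r−1}X)`;
hence for a unit vector `φ ∈ V^⊥` the mean hitting time of the QMC `Λ` from vertex 2
to vertex 1 equals the mean hitting time `τ(φ→V)` of the channel `T` to `V`. -/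
theorem stmt2 {n : ℕ} (T : Module.End ℂ (Mn n))
    (hTpos : IsPosMap T) (hTtr : IsTracePreserving T)
    (P : Mn n) (hPH : P.IsHermitian) (hPidem : P * P = P)
    (Q : Mn n) (hQ : Q = 1 - P) :
    (∀ (X : Mn n) (r : ℕ),
      (((Lam T Q * ((1 - proj1 n) * Lam T Q) ^ r) ((0 : Mn n), X)).1).trace
        = ((sandwich P * T * (sandwich Q * T) ^ r) X).trace) ∧
    (∀ φ : Fin n → ℂ, star φ ⬝ᵥ φ = 1 → Q.mulVec φ = φ →
      (∑' r : ℕ, ((r : ℂ) + 1) *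
          (((Lam T Q * ((1 - proj1 n) * Lam T Q) ^ r) ((0 : Mn n), rhoOf φ)).1).trace)
        = tau T P Q (rhoOf φ)) := by
  have hQidem : Q * Q = Q := by
    rw [hQ, sub_mul, mul_sub, mul_sub, hPidem, one_mul, one_mul, mul_one]; abel
  have key : ∀ (X : Mn n) (r : ℕ),
      (((Lam T Q * ((1 - proj1 n) * Lam T Q) ^ r) ((0 : Mn n), X)).1).trace
        = ((sandwich P * T * (sandwich Q * T) ^ r) X).trace := by
    intro X r
    rw [Module.End.mul_apply, iter_aux]
    set Y := ((sandwich Q * T) ^ r) X with hY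
    have h1 : ((Lam T Q) ((0 : Mn n), Y)).1 = T Y - Q * T Y * Q := by
      simp [Lam, sandwich, sumPair, mul_assoc]
    have h2 : ((sandwich P * T * (sandwich Q * T) ^ r) X) = P * T Y * P := by
      simp [Module.End.mul_apply, sandwich, hY, mul_assoc]
    rw [h1, h2]
    have hc : ∀ (R : Mn n), R * R = R → (R * T Y * R).trace = (R * T Y).trace := by
      intro R hR
      rw [Matrix.trace_mul_cycle, hR]
    rw [Matrix.trace_sub, hc Q hQidem, hc P hPidem, hQ, sub_mul, one_mul,
      Matrix.trace_sub]
    ring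
  refine ⟨key, fun φ _ _ => ?_⟩
  unfold tau
  exact tsum_congr fun r => by rw [key]
end
end

section
/- Let T be a quantum channel on M_n and V ⊆ ℂⁿ a subspace such that 1 is not an eigenvalue of the map ℚT : M_n → M_n (Assumption I). Let Λ = Λ_{T,V} be the induced QMC, A := I − Λ, and let A^# be the group inverse of A (which exists). Then I − ℚ₁Λ is invertible, K_{11} := [Λ(I−ℚ₁Λ)^{−2}]_{11} is well-defined, and for every state ρ supported in V^⊥ (i.e. ρ = QρQ) the mean hitting time of T to V from ρ satisfies τ(ρ→V) = Σ_{r≥1} r·Tr(ℙT(ℚT)^{r−1}ρ) = Tr( K_{11}( [(I − A^# + A^#_d E)]_{12}(ρ) ) ), which is the (1,2) block of D(I − A^# + A^#_d E) applied to ρ, with D = diag(K_{11}, K_{22}) block-diagonal (only K_{11} enters this block). -/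
open Matrix
open scoped ComplexOrder

noncomputable section

/-!
Write `C = ℚT`, `J = (I − C)⁻¹` and `t_r = Tr(C^r ρ)`. Since `T` preserves the trace,
`Tr(ℙT C^r ρ) = t_r − t_{r+1}`; positivity makes `t_r` nonnegative and nonincreasing, so by Abel
summation `τ(ρ → V) = Σ t_r`. From `Σ_{r<N} C^r = J − J C^N` and `|Tr(J C^N ρ)| = O(t_N)` (entries
of a positive semidefinite matrix are bounded by its trace) this series sums to `Tr(J ρ)`.

On `M_n ⊕ M_n`, the map `I − ℚ₁Λ` turns `X₁ + X₂` into `(I − C)(X₁ + X₂)`, so its inverse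
turns it into `J(X₁ + X₂)`; as `Tr((ΛY)₁) = Tr((I − C)(Y₁ + Y₂))`, the right-hand side at `(X, 0)` is
`Tr((I − C) J² X) = Tr(J X)`. Finally `(ρ, −ρ)` lies in the kernel of `Λ`, hence is fixed by `A` and
so by `A^#`; this makes the `(1,2)` block of `I − A^# + A^#_d E` act as the identity on `ρ`.
-/

open Filter Topology Finset

theorem Antitone.tendsto_nat_mul_of_summable {u : ℕ → ℝ} (hu : ∀ r, 0 ≤ u r)
    (hanti : Antitone u) (hsum : Summable u) :
    Tendsto (fun N : ℕ => (N : ℝ) * u N) atTop (𝓝 0) := by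
  set s : ℕ → ℝ := fun N => ∑ r ∈ range N, u r
  have hs : Tendsto s atTop (𝓝 (∑' r, u r)) := hsum.tendsto_sum_tsum_nat
  -- the `N - N / 2` terms between `N / 2` and `N` are each at least `u N`
  have hbound : ∀ N : ℕ, (N : ℝ) * u N ≤ 2 * (s N - s (N / 2)) := by
    intro N
    have hcard : ((N - N / 2 : ℕ) : ℝ) * u N ≤ s N - s (N / 2) := by
      rw [← Finset.sum_Ico_eq_sub _ (Nat.div_le_self N 2)]
      simpa [Nat.card_Ico] using
        Finset.card_nsmul_le_sum (Ico (N / 2) N) u (u N)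
          fun r hr => hanti (Finset.mem_Ico.mp hr).2.le
    have hN : (N : ℝ) ≤ 2 * ((N - N / 2 : ℕ) : ℝ) := by
      exact_mod_cast (by omega : N ≤ 2 * (N - N / 2))
    nlinarith [hu N]
  have hlim : Tendsto (fun N => 2 * (s N - s (N / 2))) atTop (𝓝 0) := by
    simpa using (hs.sub (hs.comp (Nat.tendsto_div_const_atTop two_ne_zero))).const_mul 2
  exact squeeze_zero (fun N => mul_nonneg N.cast_nonneg (hu N)) hbound hlim

theorem hasSum_succ_mul_sub_of_antitone {u : ℕ → ℝ} {S : ℝ} (hu : ∀ r, 0 ≤ u r)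
    (hanti : Antitone u) (hS : HasSum u S) :
    HasSum (fun r : ℕ => ((r : ℝ) + 1) * (u r - u (r + 1))) S := by
  have hpartial : ∀ N : ℕ, ∑ r ∈ range N, ((r : ℝ) + 1) * (u r - u (r + 1))
      = ∑ r ∈ range N, u r - N * u N := by
    intro N
    induction N with
    | zero => simp
    | succ N ih => rw [sum_range_succ, sum_range_succ, ih]; push_cast; ring
  rw [hasSum_iff_tendsto_nat_of_nonneg
    (fun r => mul_nonneg (by positivity) (sub_nonneg.2 (hanti r.le_succ)))]
  simp only [hpartial]
  simpa using hS.tendsto_sum_nat.sub (hanti.tendsto_nat_mul_of_summable hu hS.summable)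

theorem hasSum_ofReal_of_sum_range_eq_sub {u : ℕ → ℝ} {b : ℕ → ℂ} {L : ℂ} {K : ℝ}
    (hu : ∀ r, 0 ≤ u r) (hanti : Antitone u)
    (hsum : ∀ N, ∑ r ∈ range N, (u r : ℂ) = L - b N) (hb : ∀ N, ‖b N‖ ≤ K * u N) :
    HasSum (fun r => (u r : ℂ)) L := by
  have hbounded : ∀ N, ∑ r ∈ range N, u r ≤ ‖L‖ + |K| * u 0 := by
    intro N
    calc ∑ r ∈ range N, u r = (L - b N).re := by rw [← hsum N, Complex.re_sum]; simp
      _ ≤ ‖L‖ + ‖b N‖ := (Complex.re_le_norm _).trans (norm_sub_le _ _)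
      _ ≤ ‖L‖ + |K| * u 0 := by
        gcongr
        exact (hb N).trans ((mul_le_mul_of_nonneg_right (le_abs_self K) (hu N)).trans
          (mul_le_mul_of_nonneg_left (hanti N.zero_le) (abs_nonneg K)))
  have hsummable : Summable u := summable_of_sum_range_le hu hbounded
  have hb0 : Tendsto b atTop (𝓝 0) :=
    squeeze_zero_norm hb (by simpa using hsummable.tendsto_atTop_zero.const_mul K)
  rw [(Complex.summable_ofReal.mpr hsummable).hasSum_iff_tendsto_nat]
  simpa [hsum] using (tendsto_const_nhds (x := L)).sub hb0

theorem Matrix.PosSemidef.trace_eq_re {ι : Type*} [Fintype ι] {Z : Matrix ι ι ℂ}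
    (hZ : Z.PosSemidef) : Z.trace = (Z.trace.re : ℂ) :=
  Complex.eq_re_of_ofReal_le (r := 0) (by rw [Complex.ofReal_zero]; exact hZ.trace_nonneg)

theorem Matrix.PosSemidef.norm_trace {ι : Type*} [Fintype ι] {Z : Matrix ι ι ℂ}
    (hZ : Z.PosSemidef) : ‖Z.trace‖ = Z.trace.re := by
  rw [hZ.trace_eq_re, Complex.norm_of_nonneg (Complex.nonneg_iff.mp hZ.trace_nonneg).1,
    Complex.ofReal_re]

theorem Matrix.PosSemidef.norm_apply_le_norm_trace {ι : Type*} [Fintype ι]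
    {Z : Matrix ι ι ℂ} (hZ : Z.PosSemidef) (i j : ι) : ‖Z i j‖ ≤ ‖Z.trace‖ := by
  have hdiag_re (k : ι) : Z k k = (Z k k).re :=
    Complex.eq_re_of_ofReal_le (r := 0) (by rw [Complex.ofReal_zero]; exact hZ.diag_nonneg)
  have hdiag_nonneg (k : ι) : 0 ≤ (Z k k).re := (Complex.nonneg_iff.mp hZ.diag_nonneg).1
  have hdiag_le (k : ι) : (Z k k).re ≤ ‖Z.trace‖ := by
    rw [hZ.norm_trace, Matrix.trace, Complex.re_sum]
    exact Finset.single_le_sum (fun l _ => hdiag_nonneg l) (Finset.mem_univ k)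
  have hminor : ‖Z i j‖ ^ 2 ≤ (Z i i).re * (Z j j).re := by
    have hdet := (hZ.submatrix ![i, j]).det_nonneg
    have hji : Z j i = star (Z i j) := (hZ.isHermitian.apply j i).symm
    simp only [Matrix.det_fin_two, submatrix_apply, Matrix.cons_val_zero, Matrix.cons_val_one,
      sub_nonneg] at hdet
    rw [hji, Complex.star_def, Complex.mul_conj', hdiag_re i, hdiag_re j] at hdet
    exact_mod_cast hdet
  nlinarith [mul_le_mul (hdiag_le i) (hdiag_le j) (hdiag_nonneg j) (norm_nonneg _),
    norm_nonneg (Z i j), norm_nonneg Z.trace]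

section
attribute [local instance] Matrix.seminormedAddCommGroup Matrix.normedSpace

theorem Matrix.exists_norm_le_mul_norm_trace {ι : Type*} [Fintype ι]
    (f : Matrix ι ι ℂ →ₗ[ℂ] ℂ) :
    ∃ K : ℝ, ∀ Z : Matrix ι ι ℂ, Z.PosSemidef → ‖f Z‖ ≤ K * ‖Z.trace‖ := by
  obtain ⟨K, hK0, hK⟩ := (LinearMap.toContinuousLinearMap f).bound
  exact ⟨K, fun Z hZ => (hK Z).trans <| mul_le_mul_of_nonneg_left
    ((Matrix.norm_le_iff (norm_nonneg _)).mpr hZ.norm_apply_le_norm_trace) hK0.le⟩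

end

theorem Module.End.apply_eq_self_of_mul_mul_eq_of_commute {R M : Type*} [Semiring R]
    [AddCommMonoid M] [Module R M] {A B : Module.End R M} (hABA : A * B * A = A)
    (hAB : A * B = B * A) {v : M} (hv : A v = v) : B v = v :=
  calc B v = (B * A) v := by rw [Module.End.mul_apply, hv]
    _ = (A * B * A) v := by rw [← hAB, Module.End.mul_apply (A * B), hv]
    _ = v := by rw [hABA, hv]

section

variable {n : ℕ}

theorem sandwich_apply (Q X : Mn n) : sandwich Q X = Q * X * Q := by
  simp [sandwich, mul_assoc]

theorem trace_sandwich {P : Mn n} (hP : P * P = P) (Y : Mn n) :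
    (sandwich P Y).trace = (P * Y).trace := by
  rw [sandwich_apply, Matrix.trace_mul_cycle, hP]

theorem trace_sandwich_eq_trace_sub {P Q : Mn n} (hP : P * P = P) (hQ : Q = 1 - P)
    (Y : Mn n) : (sandwich P Y).trace = Y.trace - (sandwich Q Y).trace := by
  have hQQ : Q * Q = Q := by rw [hQ]; noncomm_ring [hP]
  rw [trace_sandwich hP, trace_sandwich hQQ, hQ, sub_mul, one_mul, Matrix.trace_sub,
    sub_sub_cancel]

theorem Matrix.PosSemidef.sandwich {Q X : Mn n} (hQ : Q.IsHermitian) (hX : X.PosSemidef) :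
    (sandwich Q X).PosSemidef := by
  simpa [sandwich_apply, hQ.eq] using hX.mul_mul_conjTranspose_same Q

theorem IsChannel.isTracePreserving {T : Module.End ℂ (Mn n)} (h : IsChannel T) :
    IsTracePreserving T := by
  obtain ⟨k, V, hT, hV⟩ := h
  intro X
  simp_rw [hT, Matrix.trace_sum, Matrix.trace_mul_cycle _ X, ← Matrix.trace_sum,
    ← Finset.sum_mul, hV, one_mul]

theorem IsChannel.isPosMap {T : Module.End ℂ (Mn n)} (h : IsChannel T) : IsPosMap T := by
  obtain ⟨k, V, hT, -⟩ := h
  intro X hX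
  rw [hT X]
  exact Finset.sum_induction _ _ (fun _ _ => .add) .zero
    fun i _ => hX.mul_mul_conjTranspose_same (V i)

theorem IsPosMap.mul {S T : Module.End ℂ (Mn n)} (hS : IsPosMap S) (hT : IsPosMap T) :
    IsPosMap (S * T) :=
  fun X hX => hS _ (hT X hX)

theorem IsPosMap.pow {C : Module.End ℂ (Mn n)} (hC : IsPosMap C) (r : ℕ) : IsPosMap (C ^ r) := by
  induction r with
  | zero => simp [IsPosMap]
  | succ r ih => rw [pow_succ]; exact ih.mul hC

theorem antitone_re_trace_pow_apply {C : Module.End ℂ (Mn n)} (hC : IsPosMap C)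
    (hCtr : ∀ X : Mn n, X.PosSemidef → (C X).trace ≤ X.trace) {ρ : Mn n}
    (hρ : ρ.PosSemidef) : Antitone fun r : ℕ => ((C ^ r) ρ).trace.re :=
  antitone_nat_of_succ_le fun r => by
    rw [pow_succ', Module.End.mul_apply]
    exact (Complex.le_def.mp (hCtr _ (hC.pow r ρ hρ))).1

theorem hasSum_trace_pow_apply {C : Module.End ℂ (Mn n)} (hC : IsPosMap C)
    (hCtr : ∀ X : Mn n, X.PosSemidef → (C X).trace ≤ X.trace) (hunit : IsUnit (1 - C))
    {ρ : Mn n} (hρ : ρ.PosSemidef) :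
    HasSum (fun r : ℕ => ((C ^ r) ρ).trace) (Ring.inverse (1 - C) ρ).trace := by
  set J := Ring.inverse (1 - C)
  have hgeom : ∀ N, ∑ r ∈ range N, C ^ r = J - J * C ^ N := fun N =>
    calc ∑ r ∈ range N, C ^ r = J * (1 - C) * ∑ r ∈ range N, C ^ r := by
          rw [Ring.inverse_mul_cancel _ hunit, one_mul]
      _ = J - J * C ^ N := by rw [mul_assoc, mul_neg_geom_sum, mul_sub, mul_one]
  obtain ⟨K, hK⟩ :=
    Matrix.exists_norm_le_mul_norm_trace (Matrix.traceLinearMap (Fin n) ℂ ℂ ∘ₗ J)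
  have hpsd (r : ℕ) : ((C ^ r) ρ).PosSemidef := hC.pow r ρ hρ
  rw [show (fun r : ℕ => ((C ^ r) ρ).trace) = fun r => (((C ^ r) ρ).trace.re : ℂ) from
    funext fun r => (hpsd r).trace_eq_re]
  refine hasSum_ofReal_of_sum_range_eq_sub (b := fun N => (J ((C ^ N) ρ)).trace) (K := K)
    (fun r => (Complex.nonneg_iff.mp (hpsd r).trace_nonneg).1)
    (antitone_re_trace_pow_apply hC hCtr hρ) (fun N => ?_) (fun N => ?_)
  · rw [Finset.sum_congr rfl fun r _ => (hpsd r).trace_eq_re.symm, ← Matrix.trace_sum,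
      ← LinearMap.sum_apply, hgeom, LinearMap.sub_apply, Module.End.mul_apply, Matrix.trace_sub]
  · rw [← (hpsd N).norm_trace]
    exact hK _ (hpsd N)

theorem tau_eq_trace_inverse {T : Module.End ℂ (Mn n)} (hT : IsChannel T) {P Q : Mn n}
    (hPH : P.IsHermitian) (hP : P * P = P) (hQ : Q = 1 - P)
    (hunit : IsUnit (1 - sandwich Q * T)) {ρ : Mn n} (hρ : ρ.PosSemidef) :
    tau T P Q ρ = (Ring.inverse (1 - sandwich Q * T) ρ).trace := by
  set C := sandwich Q * T
  have hQH : Q.IsHermitian := hQ ▸ isHermitian_one.sub hPH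
  have hsplit (Y : Mn n) : (sandwich P (T Y)).trace = Y.trace - (C Y).trace := by
    rw [trace_sandwich_eq_trace_sub hP hQ, hT.isTracePreserving]
    rfl
  have hC : IsPosMap C := IsPosMap.mul (fun X hX => hX.sandwich hQH) hT.isPosMap
  have hCtr (X : Mn n) (hX : X.PosSemidef) : (C X).trace ≤ X.trace := by
    rw [← sub_nonneg, ← hsplit]
    exact ((hT.isPosMap X hX).sandwich hPH).trace_nonneg
  have hpsd (r : ℕ) : ((C ^ r) ρ).PosSemidef := hC.pow r ρ hρ
  set u : ℕ → ℝ := fun r => ((C ^ r) ρ).trace.re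
  have hu : HasSum (fun r => (u r : ℂ)) (Ring.inverse (1 - C) ρ).trace := by
    convert hasSum_trace_pow_apply hC hCtr hunit hρ using 2 with r
    exact (hpsd r).trace_eq_re.symm
  obtain ⟨S, hS⟩ := Complex.summable_ofReal.mp hu.summable
  have hAbel := Complex.hasSum_ofReal.mpr <| hasSum_succ_mul_sub_of_antitone
    (fun r => (Complex.nonneg_iff.mp (hpsd r).trace_nonneg).1)
    (antitone_re_trace_pow_apply hC hCtr hρ) hS
  rw [hu.unique (Complex.hasSum_ofReal.mpr hS), ← hAbel.tsum_eq, tau]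
  refine tsum_congr fun r => ?_
  rw [Module.End.mul_apply, Module.End.mul_apply, hsplit, ← Module.End.mul_apply C, ← pow_succ',
    (hpsd r).trace_eq_re, (hpsd (r + 1)).trace_eq_re]
  push_cast
  rfl

theorem sumPair_apply (x : Mn n × Mn n) : sumPair n x = x.1 + x.2 := rfl

theorem Lam_apply (T : Module.End ℂ (Mn n)) (Q : Mn n) (x : Mn n × Mn n) :
    Lam T Q x = ((1 - sandwich Q) (T (x.1 + x.2)), sandwich Q (T (x.1 + x.2))) := rfl

theorem Lam_apply_neg (T : Module.End ℂ (Mn n)) (Q X : Mn n) : Lam T Q (X, -X) = 0 := by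
  simp [Lam_apply]

theorem trace_fst_Lam_apply {T : Module.End ℂ (Mn n)} (hT : IsTracePreserving T) (Q : Mn n)
    (x : Mn n × Mn n) :
    (Lam T Q x).1.trace = ((1 - sandwich Q * T) (sumPair n x)).trace := by
  simp only [Lam_apply, sumPair_apply, LinearMap.sub_apply, Module.End.one_apply,
    Module.End.mul_apply, Matrix.trace_sub]
  rw [hT]

theorem one_sub_compl_proj1_mul_Lam_apply (T : Module.End ℂ (Mn n)) (Q : Mn n)
    (x : Mn n × Mn n) :
    (1 - (1 - proj1 n) * Lam T Q) x = (x.1, x.2 - (sandwich Q * T) (x.1 + x.2)) := by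
  simp [Lam_apply, proj1, Prod.ext_iff]

theorem sumPair_one_sub_compl_proj1_mul_Lam_apply (T : Module.End ℂ (Mn n)) (Q : Mn n)
    (x : Mn n × Mn n) :
    sumPair n ((1 - (1 - proj1 n) * Lam T Q) x) = (1 - sandwich Q * T) (sumPair n x) := by
  rw [one_sub_compl_proj1_mul_Lam_apply, sumPair_apply, sumPair_apply, LinearMap.sub_apply,
    Module.End.one_apply, add_sub_assoc]

theorem isUnit_one_sub_compl_proj1_mul_Lam {T : Module.End ℂ (Mn n)} {Q : Mn n}
    (hunit : IsUnit (1 - sandwich Q * T)) : IsUnit (1 - (1 - proj1 n) * Lam T Q) := by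
  rw [LinearMap.isUnit_iff_ker_eq_bot, LinearMap.ker_eq_bot'] at hunit ⊢
  intro x hx
  rw [one_sub_compl_proj1_mul_Lam_apply, Prod.mk_eq_zero] at hx
  obtain ⟨h1, h2⟩ := hx
  rw [h1, zero_add] at h2
  exact Prod.ext h1 (hunit x.2 h2)

theorem sumPair_inverse_one_sub_compl_proj1_mul_Lam_apply {T : Module.End ℂ (Mn n)} {Q : Mn n}
    (hunit : IsUnit (1 - sandwich Q * T)) (x : Mn n × Mn n) :
    sumPair n (Ring.inverse (1 - (1 - proj1 n) * Lam T Q) x)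
      = Ring.inverse (1 - sandwich Q * T) (sumPair n x) := by
  have hM := isUnit_one_sub_compl_proj1_mul_Lam hunit
  calc sumPair n (Ring.inverse (1 - (1 - proj1 n) * Lam T Q) x)
      = Ring.inverse (1 - sandwich Q * T)
          ((1 - sandwich Q * T) (sumPair n (Ring.inverse (1 - (1 - proj1 n) * Lam T Q) x))) := by
        rw [← Module.End.mul_apply, Ring.inverse_mul_cancel _ hunit, Module.End.one_apply]
    _ = Ring.inverse (1 - sandwich Q * T) (sumPair n x) := by
        rw [← sumPair_one_sub_compl_proj1_mul_Lam_apply, ← Module.End.mul_apply,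
          Ring.mul_inverse_cancel _ hM, Module.End.one_apply]

theorem trace_fst_Lam_mul_inverse_sq_apply {T : Module.End ℂ (Mn n)} (hT : IsTracePreserving T)
    {Q : Mn n} (hunit : IsUnit (1 - sandwich Q * T)) (X : Mn n) :
    ((Lam T Q * Ring.inverse (1 - (1 - proj1 n) * Lam T Q) ^ 2) (X, 0)).1.trace
      = (Ring.inverse (1 - sandwich Q * T) X).trace := by
  rw [Module.End.mul_apply, trace_fst_Lam_apply hT, pow_two, Module.End.mul_apply,
    sumPair_inverse_one_sub_compl_proj1_mul_Lam_apply hunit,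
    sumPair_inverse_one_sub_compl_proj1_mul_Lam_apply hunit, sumPair_apply, add_zero,
    ← Module.End.mul_apply _ (Ring.inverse _), Ring.mul_inverse_cancel _ hunit,
    Module.End.one_apply]

theorem fst_one_sub_add_diagPart_mul_Emap_apply {B : Module.End ℂ (Mn n × Mn n)} {X : Mn n}
    (hB : B (X, -X) = (X, -X)) : ((1 - B + diagPart B * Emap n) (0, X)).1 = X := by
  have hsplit : B (X, 0) = B (0, X) + (X, -X) := by
    rw [← hB, ← map_add]
    simp
  simp [diagPart, Emap, proj1, proj2, sumPair_apply, hsplit]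

end

theorem stmt5_general {n : ℕ} (T : Module.End ℂ (Mn n)) (hchan : IsChannel T)
    (P : Mn n) (hPH : P.IsHermitian) (hPidem : P * P = P)
    (Q : Mn n) (hQ : Q = 1 - P)
    (hAssumpI : ¬ Module.End.HasEigenvalue (sandwich Q * T) (1 : ℂ))
    (A B : Module.End ℂ (Mn n × Mn n)) (hA : A = 1 - Lam T Q)
    (hB1 : A * B * A = A) (hB3 : A * B = B * A)
    (ρ : Mn n) (hρpsd : ρ.PosSemidef) :
    IsUnit (1 - (1 - proj1 n) * Lam T Q) ∧
    (tau T P Q ρ =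
      (((Lam T Q * (Ring.inverse (1 - (1 - proj1 n) * Lam T Q)) ^ 2)
          ((((1 - B + diagPart B * Emap n) ((0 : Mn n), ρ)).1, (0 : Mn n)))).1).trace) := by
  have hunit : IsUnit (1 - sandwich Q * T) := by
    simpa [Module.End.hasEigenvalue_iff_mem_spectrum, spectrum.mem_iff] using hAssumpI
  refine ⟨isUnit_one_sub_compl_proj1_mul_Lam hunit, ?_⟩
  have hAρ : A (ρ, -ρ) = (ρ, -ρ) := by
    rw [hA, LinearMap.sub_apply, Lam_apply_neg, Module.End.one_apply, sub_zero]
  rw [fst_one_sub_add_diagPart_mul_Emap_apply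
      (Module.End.apply_eq_self_of_mul_mul_eq_of_commute hB1 hB3 hAρ),
    trace_fst_Lam_mul_inverse_sq_apply hchan.isTracePreserving hunit,
    tau_eq_trace_inverse hchan hPH hPidem hQ hunit hρpsd]

/-- main theorem (beyond the irreducible case). Under Assumption I
(`1` is not an eigenvalue of `ℚT`), with `A = I − Λ` and `A^#` its group inverse,
`I − ℚ₁Λ` is invertible and for every state `ρ` supported in `V^⊥`,
`τ(ρ→V) = Tr(K₁₁([(I − A^# + A^#_d E)]₁₂(ρ)))`, the `(1,2)` block of
`D(I − A^# + A^#_d E)` applied to `ρ`. -/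
theorem stmt5 {n : ℕ} (T : Module.End ℂ (Mn n)) (hchan : IsChannel T)
    (P : Mn n) (hPH : P.IsHermitian) (hPidem : P * P = P)
    (Q : Mn n) (hQ : Q = 1 - P)
    (hAssumpI : ¬ Module.End.HasEigenvalue (sandwich Q * T) (1 : ℂ))
    (A B : Module.End ℂ (Mn n × Mn n)) (hA : A = 1 - Lam T Q)
    (hB1 : A * B * A = A) (hB2 : B * A * B = B) (hB3 : A * B = B * A)
    (ρ : Mn n) (hρpsd : ρ.PosSemidef) (hρtr : ρ.trace = 1) (hρsupp : Q * ρ * Q = ρ) :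
    IsUnit (1 - (1 - proj1 n) * Lam T Q) ∧
    (tau T P Q ρ =
      (((Lam T Q * (Ring.inverse (1 - (1 - proj1 n) * Lam T Q)) ^ 2)
          ((((1 - B + diagPart B * Emap n) ((0 : Mn n), ρ)).1, (0 : Mn n)))).1).trace) :=
  stmt5_general T hchan P hPH hPidem Q hQ hAssumpI A B hA hB1 hB3 ρ hρpsd
end
end

section
/- Let T be a positive trace-preserving linear map on M_n and let A = I − T (as a linear endomorphism of M_n). Then A has index at most 1, i.e. range(A²) = range(A), and consequently the group inverse of A exists: there is a unique linear map A^# on M_n satisfying A A^# A = A, A^# A A^# = A^#, and A A^# = A^# A. -/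
open Matrix
open scoped ComplexOrder

noncomputable section

/-!
Positivity and trace preservation make every orbit `T^k X` bounded: `X` is a combination of four
positive semidefinite matrices, `T^k` keeps each of them positive semidefinite with the same trace,
and the entries of a positive semidefinite matrix are bounded by its trace. If `A² X = 0`, then
`Y = A X` is fixed by `T` and `T^k X = X - k Y`, so boundedness forces `Y = 0`. Hence
`ker A² = ker A`, and by rank–nullity `range A² = range A`. These give `A = A² x = y A²` for some
`x, y`, and then `y A x` is a group inverse of `A`; group inverses in a monoid are unique.
-/

section GroupInverse

variable {M : Type*} [Monoid M]

def IsGroupInverse (a b : M) : Prop :=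
  a * b * a = a ∧ b * a * b = b ∧ a * b = b * a

theorem IsGroupInverse.unique {a b c : M} (hb : IsGroupInverse a b) (hc : IsGroupInverse a c) :
    b = c := by
  obtain ⟨hb₁, hb₂, hb₃⟩ := hb
  obtain ⟨hc₁, hc₂, hc₃⟩ := hc
  have hproj : a * b = a * c := calc
    a * b = a * c * (a * b) := by rw [← mul_assoc, hc₁]
    _ = a * c := by rw [hc₃, hb₃, mul_assoc, ← mul_assoc a b a, hb₁]
  calc b = b * (a * b) := by rw [← mul_assoc, hb₂]
    _ = b * a * c := by rw [hproj, mul_assoc]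
    _ = a * c * c := by rw [← hb₃, hproj]
    _ = c := by rw [hc₃, hc₂]

theorem isGroupInverse_of_eq_mul_sq {a x y : M} (hx : a = a * a * x) (hy : a = y * a * a) :
    IsGroupInverse a (y * a * x) := by
  have he : y * a = a * x := by
    conv_lhs => rw [hx]
    rw [← mul_assoc, ← mul_assoc, ← hy]
  have hab : a * (y * a * x) = a * x := by
    rw [he, ← mul_assoc, ← mul_assoc, ← hx]
  have hba : y * a * x * a = y * a := by
    rw [mul_assoc y, ← he, mul_assoc, ← hy]
  exact ⟨by rw [hab, ← he, ← hy], by rw [hba, mul_assoc, hab, ← mul_assoc], by rw [hab, hba, he]⟩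

theorem existsUnique_isGroupInverse_of_eq_mul_sq {a x y : M} (hx : a = a * a * x)
    (hy : a = y * a * a) : ∃! b, IsGroupInverse a b :=
  ⟨_, isGroupInverse_of_eq_mul_sq hx hy, fun _ hc ↦ hc.unique (isGroupInverse_of_eq_mul_sq hx hy)⟩

end GroupInverse

namespace LinearMap

theorem exists_comp_eq_of_range_le {R M N P : Type*} [Ring R] [AddCommGroup M] [Module R M]
    [AddCommGroup N] [Module R N] [AddCommGroup P] [Module R P] [Module.Projective R P]
    {f : P →ₗ[R] M} {g : N →ₗ[R] M} (h : range f ≤ range g) : ∃ u : P →ₗ[R] N, g ∘ₗ u = f := by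
  obtain ⟨u, hu⟩ := Module.projective_lifting_property g.rangeRestrict
    (f.codRestrict (range g) fun p ↦ h ⟨p, rfl⟩) g.surjective_rangeRestrict
  exact ⟨u, by ext p; exact congr(((($hu) p : range g) : M))⟩

theorem exists_comp_eq_of_ker_le {K U V W : Type*} [DivisionRing K] [AddCommGroup U] [Module K U]
    [AddCommGroup V] [Module K V] [AddCommGroup W] [Module K W]
    {f : V →ₗ[K] W} {g : V →ₗ[K] U} (h : ker g ≤ ker f) : ∃ u : U →ₗ[K] W, u ∘ₗ g = f := by
  obtain ⟨l, hl⟩ := ((ker g).liftQ g le_rfl).exists_leftInverse_of_injective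
    ((ker g).ker_liftQ_eq_bot _ _ le_rfl)
  refine ⟨(ker g).liftQ f h ∘ₗ l, ?_⟩
  ext v
  have := congr($hl ((ker g).mkQ v))
  simp only [comp_apply, Submodule.mkQ_apply, Submodule.liftQ_apply, id_apply] at this ⊢
  rw [this, Submodule.liftQ_apply]

variable {K V : Type*} [Field K] [AddCommGroup V] [Module K V] [FiniteDimensional K V]

theorem range_sq_eq_of_ker_sq_eq {f : Module.End K V} (h : ker (f ^ 2) = ker f) :
    range (f ^ 2) = range f := by
  have hle : range (f ^ 2) ≤ range f := by
    rw [sq, Module.End.mul_eq_comp]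
    exact range_comp_le_range f f
  refine Submodule.eq_of_le_of_finrank_le hle ?_
  have := finrank_range_add_finrank_ker (f ^ 2)
  have := finrank_range_add_finrank_ker f
  rw [h] at *
  omega

theorem existsUnique_isGroupInverse_of_ker_sq_eq {f : Module.End K V} (h : ker (f ^ 2) = ker f) :
    ∃! g, IsGroupInverse f g := by
  obtain ⟨x, hx⟩ := exists_comp_eq_of_range_le (range_sq_eq_of_ker_sq_eq h).ge
  obtain ⟨y, hy⟩ := exists_comp_eq_of_ker_le h.le
  rw [sq, Module.End.mul_eq_comp] at hx hy
  exact existsUnique_isGroupInverse_of_eq_mul_sq (x := x) (y := y) hx.symm hy.symm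

end LinearMap

section PowerBounded

variable {𝕜 E : Type*} [RCLike 𝕜] [NormedAddCommGroup E] [NormedSpace 𝕜 E]

theorem eq_zero_of_forall_norm_natCast_smul_le {y : E} {C : ℝ}
    (h : ∀ k : ℕ, ‖(k : 𝕜) • y‖ ≤ C) : y = 0 := by
  by_contra hy
  have hy' : 0 < ‖y‖ := norm_pos_iff.mpr hy
  obtain ⟨k, hk⟩ := exists_nat_gt (C / ‖y‖)
  have := h k
  rw [norm_smul, RCLike.norm_natCast] at this
  rw [div_lt_iff₀ hy'] at hk
  linarith

theorem LinearMap.ker_sq_one_sub_eq_of_bounded_orbits {T : Module.End 𝕜 E}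
    (hT : ∀ x, ∃ C, ∀ k : ℕ, ‖(T ^ k) x‖ ≤ C) : ker ((1 - T) ^ 2) = ker (1 - T) := by
  refine le_antisymm (fun x hx ↦ ?_) ?_
  · set y := (1 - T) x
    have hTy : T y = y := by
      rw [LinearMap.mem_ker, sq, Module.End.mul_apply, LinearMap.sub_apply, Module.End.one_apply,
        sub_eq_zero] at hx
      exact hx.symm
    have horbit : ∀ k : ℕ, (T ^ k) x = x - (k : 𝕜) • y := by
      intro k
      induction k with
      | zero => simp
      | succ k ih =>
        rw [pow_succ', Module.End.mul_apply, ih, map_sub, map_smul, hTy,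
          show T x = x - y by simp [y]]
        push_cast
        module
    obtain ⟨C, hC⟩ := hT x
    refine eq_zero_of_forall_norm_natCast_smul_le (𝕜 := 𝕜) (C := ‖x‖ + C) fun k ↦ ?_
    calc ‖(k : 𝕜) • y‖ = ‖x - (x - (k : 𝕜) • y)‖ := by rw [sub_sub_cancel]
      _ ≤ ‖x‖ + ‖(T ^ k) x‖ := by rw [← horbit]; exact norm_sub_le _ _
      _ ≤ ‖x‖ + C := by gcongr; exact hC k
  · rw [sq, Module.End.mul_eq_comp]
    exact ker_le_ker_comp _ _

end PowerBounded

theorem Matrix.PosSemidef.norm_apply_le_re_trace {ι 𝕜 : Type*} [Fintype ι] [RCLike 𝕜]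
    {P : Matrix ι ι 𝕜} (hP : P.PosSemidef) (i j : ι) : ‖P i j‖ ≤ RCLike.re P.trace := by
  obtain ⟨m, v, rfl⟩ := Matrix.posSemidef_iff_eq_sum_vecMulVec.mp hP
  have hrank_one : ∀ w : ι → 𝕜, ‖w i * star (w j)‖ ≤ RCLike.re (vecMulVec w (star w)).trace := by
    intro w
    have htrace : RCLike.re (vecMulVec w (star w)).trace = ∑ l, ‖w l‖ ^ 2 := by
      simp [Matrix.trace, vecMulVec_apply, RCLike.star_def, RCLike.mul_conj]
    have hi := Finset.single_le_sum (fun l _ ↦ sq_nonneg ‖w l‖) (Finset.mem_univ i)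
    have hj := Finset.single_le_sum (fun l _ ↦ sq_nonneg ‖w l‖) (Finset.mem_univ j)
    rw [htrace, norm_mul, norm_star]
    nlinarith [sq_nonneg (‖w i‖ - ‖w j‖)]
  simp only [Matrix.sum_apply, vecMulVec_apply, trace_sum, map_sum]
  exact (norm_sum_le _ _).trans (Finset.sum_le_sum fun m _ ↦ hrank_one (v m))

open scoped MatrixOrder Matrix.Norms.L2Operator in
theorem Matrix.exists_sum_four_posSemidef {ι : Type*} [Fintype ι] [DecidableEq ι]
    (X : Matrix ι ι ℂ) :
    ∃ P : Fin 4 → Matrix ι ι ℂ,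
      (∀ m, (P m).PosSemidef) ∧ X = ∑ m : Fin 4, Complex.I ^ (m : ℕ) • P m := by
  obtain ⟨P, hP, -, hX⟩ := CStarAlgebra.exists_sum_four_nonneg X
  exact ⟨P, fun m ↦ Matrix.nonneg_iff_posSemidef.mp (hP m), hX⟩

section PositiveMaps

variable {n : ℕ} {T : Module.End ℂ (Mn n)}

theorem IsPosMap.pow_s6 (hT : IsPosMap T) (k : ℕ) : IsPosMap (T ^ k) := by
  induction k with
  | zero => simp [IsPosMap]
  | succ k ih => exact fun X hX ↦ by rw [pow_succ', Module.End.mul_apply]; exact hT _ (ih X hX)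

theorem IsTracePreserving.pow_s6 (hT : IsTracePreserving T) (k : ℕ) : IsTracePreserving (T ^ k) := by
  induction k with
  | zero => simp [IsTracePreserving]
  | succ k ih => exact fun X ↦ by rw [pow_succ', Module.End.mul_apply, hT, ih]

attribute [local instance] Matrix.normedAddCommGroup Matrix.normedSpace

theorem IsPosMap.exists_norm_pow_apply_le (hTpos : IsPosMap T) (hTtr : IsTracePreserving T)
    (X : Mn n) : ∃ C, ∀ k : ℕ, ‖(T ^ k) X‖ ≤ C := by
  obtain ⟨P, hP, rfl⟩ := Matrix.exists_sum_four_posSemidef X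
  refine ⟨∑ m, (P m).trace.re, fun k ↦ ?_⟩
  have hC : 0 ≤ ∑ m, (P m).trace.re :=
    Finset.sum_nonneg fun m _ ↦ (Complex.nonneg_iff.mp (hP m).trace_nonneg).1
  refine (Matrix.norm_le_iff hC).mpr fun i j ↦ ?_
  calc ‖((T ^ k) (∑ m : Fin 4, Complex.I ^ (m : ℕ) • P m)) i j‖
      ≤ ∑ m, ‖((T ^ k) (P m)) i j‖ := by
        simp only [map_sum, map_smul, Matrix.sum_apply, Matrix.smul_apply, smul_eq_mul]
        refine (norm_sum_le _ _).trans (Finset.sum_le_sum fun m _ ↦ ?_)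
        simp
    _ ≤ ∑ m, (P m).trace.re := Finset.sum_le_sum fun m _ ↦ by
        simpa only [hTtr.pow_s6 k (P m), RCLike.re_to_complex] using
          (hTpos.pow_s6 k _ (hP m)).norm_apply_le_re_trace i j

theorem IsPosMap.ker_sq_one_sub_eq (hTpos : IsPosMap T) (hTtr : IsTracePreserving T) :
    LinearMap.ker ((1 - T) ^ 2) = LinearMap.ker (1 - T) :=
  LinearMap.ker_sq_one_sub_eq_of_bounded_orbits (hTpos.exists_norm_pow_apply_le hTtr)

end PositiveMaps

/-- For a positive trace-preserving `T` on `M_n` and `A = I − T`, the index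
of `A` is at most 1, i.e. `range(A²) = range(A)`, and consequently the group inverse of
`A` exists and is unique. -/
theorem stmt6 {n : ℕ} (T : Module.End ℂ (Mn n))
    (hTpos : IsPosMap T) (hTtr : IsTracePreserving T)
    (A : Module.End ℂ (Mn n)) (hA : A = 1 - T) :
    LinearMap.range (A ^ 2) = LinearMap.range A ∧
    (∃! B : Module.End ℂ (Mn n), A * B * A = A ∧ B * A * B = B ∧ A * B = B * A) := by
  have hker : LinearMap.ker (A ^ 2) = LinearMap.ker A := hA ▸ hTpos.ker_sq_one_sub_eq hTtr
  exact ⟨LinearMap.range_sq_eq_of_ker_sq_eq hker,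
    LinearMap.existsUnique_isGroupInverse_of_ker_sq_eq hker⟩
end
end

section
/- Let T be a completely positive trace-preserving map on M_n. (1) If T is irreducible and π is an invariant state of T, then π is the unique invariant state of T and π is positive definite (faithful). (2) Conversely, if T admits a unique invariant state and this state is positive definite, then T is irreducible. -/
open Matrix
open scoped ComplexOrder

noncomputable section

/-!
Two facts about a channel `T(X) = ∑ Vᵢ X Vᵢᴴ` drive the proof. First, the positive and negative
parts of a fixed Hermitian matrix are again fixed: trace preservation leaves no room for `T` to
move mass of the positive part off its support. Second, the support projection of a fixed
positive matrix `ρ` reduces `T`: compressing `ρ = ∑ Vᵢ ρ Vᵢᴴ` to `ker ρ` kills every summand, so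
the `Vᵢᴴ` preserve `ker ρ`.

If `T` is irreducible, the support of every nonzero fixed positive matrix is everything, so
invariant states are faithful; and for two invariant states the positive part of their
difference is either zero or invertible, which forces the difference to vanish. Conversely, a
reducing projection `P ≠ 0` carries a nonzero fixed Hermitian matrix in `P M_n P` (`T - 1`
cannot map the corner onto itself, as it kills traces), hence an invariant state supported
in `P`; uniqueness identifies it with the faithful invariant state, which forces `P = 1`.
-/

open scoped MatrixOrder

namespace Matrix

variable {m 𝕜 : Type*} [Fintype m] [DecidableEq m] [RCLike 𝕜]

lemma PosSemidef.mul_eq_zero_of_conjTranspose_mul_mul_eq_zero {A B : Matrix m m 𝕜}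
    (hA : A.PosSemidef) (h : Bᴴ * A * B = 0) : A * B = 0 := by
  obtain ⟨C, rfl⟩ := CStarAlgebra.nonneg_iff_eq_star_mul_self.mp hA.nonneg
  have hCB : (C * B)ᴴ * (C * B) = 0 := by
    rw [← h, conjTranspose_mul, star_eq_conjTranspose]
    noncomm_ring
  rw [Matrix.mul_assoc, conjTranspose_mul_self_eq_zero.mp hCB, Matrix.mul_zero]

lemma trace_eq_trace_mul_mul_add_trace_mul_mul {A Q : Matrix m m 𝕜} (hQ : Q * Q = Q) :
    A.trace = (Q * A * Q).trace + ((1 - Q) * A * (1 - Q)).trace := by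
  have hQAQ : (Q * A * Q).trace = (Q * A).trace := by rw [trace_mul_cycle, hQ]
  have hAQ : (A * Q).trace = (Q * A).trace := trace_mul_comm _ _
  simp only [sub_mul, mul_sub, one_mul, mul_one, trace_sub, hQAQ, hAQ]
  ring

-- `Q` is the spectral projection of `δ` onto `(0, ∞)`.
lemma IsHermitian.exists_projection_posSemidef_mul {δ : Matrix m m 𝕜} (hδ : δ.IsHermitian) :
    ∃ Q : Matrix m m 𝕜, Q.IsHermitian ∧ Q * Q = Q ∧ (Q * δ).PosSemidef ∧
      (Q * δ - δ).PosSemidef := by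
  have hcont (f : ℝ → ℝ) : ContinuousOn f (spectrum ℝ δ) := δ.finite_real_spectrum.continuousOn f
  set χ : ℝ → ℝ := fun x => if 0 < x then 1 else 0
  have hδ_eq : cfc (fun x => x) δ = δ := cfc_id' ℝ δ (hδ : IsSelfAdjoint δ)
  have hQδ : cfc χ δ * δ = cfc (fun x => χ x * x) δ := by
    rw [cfc_mul χ (fun x => x) δ (hcont _) (hcont _), hδ_eq]
  have hQδ_sub : cfc χ δ * δ - δ = cfc (fun x => χ x * x - x) δ := by
    rw [cfc_sub _ _ δ (hcont _) (hcont _), hδ_eq, hQδ]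
  refine ⟨cfc χ δ, cfc_predicate χ δ, ?_, ?_, ?_⟩
  · rw [← cfc_mul χ χ δ (hcont _) (hcont _)]
    refine cfc_congr fun x _ => ?_
    by_cases hx : 0 < x <;> simp [χ, hx]
  · rw [hQδ, ← nonneg_iff_posSemidef]
    refine cfc_nonneg fun x _ => ?_
    by_cases hx : 0 < x
    · simp [χ, hx, hx.le]
    · simp [χ, hx]
  · rw [hQδ_sub, ← nonneg_iff_posSemidef]
    refine cfc_nonneg fun x _ => ?_
    by_cases hx : 0 < x
    · simp [χ, hx]
    · simp [χ, hx, le_of_not_gt hx]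

lemma IsHermitian.exists_support_projection {ρ : Matrix m m 𝕜} (hρ : ρ.IsHermitian) :
    ∃ P S : Matrix m m 𝕜, P.IsHermitian ∧ P * P = P ∧ ρ * P = ρ ∧ P = S * ρ := by
  have hcont (f : ℝ → ℝ) : ContinuousOn f (spectrum ℝ ρ) := ρ.finite_real_spectrum.continuousOn f
  have hρ_eq : cfc (fun x : ℝ => x) ρ = ρ := cfc_id' ℝ ρ (hρ : IsSelfAdjoint ρ)
  have hρP : cfc (fun x : ℝ => x) ρ * cfc (fun x : ℝ => x⁻¹ * x) ρ = cfc (fun x : ℝ => x) ρ := by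
    rw [← cfc_mul _ _ ρ (hcont _) (hcont _)]
    refine cfc_congr fun x _ => ?_
    by_cases hx : x = 0 <;> simp [hx]
  have hPSρ : cfc (fun x : ℝ => x⁻¹ * x) ρ = cfc (fun x : ℝ => x⁻¹) ρ * cfc (fun x : ℝ => x) ρ :=
    cfc_mul _ _ ρ (hcont _) (hcont _)
  refine ⟨cfc (fun x : ℝ => x⁻¹ * x) ρ, cfc (fun x : ℝ => x⁻¹) ρ, cfc_predicate _ ρ, ?_, ?_, ?_⟩
  · rw [← cfc_mul _ _ ρ (hcont _) (hcont _)]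
    refine cfc_congr fun x _ => ?_
    by_cases hx : x = 0 <;> simp [hx]
  · rwa [hρ_eq] at hρP
  · rwa [hρ_eq] at hPSρ

end Matrix

lemma Module.End.exists_ne_zero_apply_eq_self {K V : Type*} [Field K] [AddCommGroup V]
    [Module K V] [FiniteDimensional K V] (f : Module.End K V) (φ : V →ₗ[K] K) (hφ : φ ∘ₗ f = φ)
    (hφ0 : φ ≠ 0) : ∃ x, x ≠ 0 ∧ f x = x := by
  by_contra! hf
  have hinj : Function.Injective ⇑(f - 1) := by
    rw [← LinearMap.ker_eq_bot, LinearMap.ker_eq_bot']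
    intro x hx
    by_contra hx0
    exact hf x hx0 (sub_eq_zero.mp hx)
  refine hφ0 (LinearMap.ext fun y => ?_)
  obtain ⟨x, rfl⟩ := LinearMap.injective_iff_surjective.mp hinj y
  simp [← LinearMap.comp_apply φ f, hφ]

section Channel

variable {n : ℕ} {T : Module.End ℂ (Mn n)}

lemma IsChannel.isPosMap_s10 (hT : IsChannel T) : IsPosMap T := by
  obtain ⟨k, V, hV, -⟩ := hT
  intro X hX
  rw [hV]
  exact posSemidef_sum _ fun i _ => hX.mul_mul_conjTranspose_same (V i)

lemma IsChannel.isTracePreserving_s10 (hT : IsChannel T) : IsTracePreserving T := by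
  obtain ⟨k, V, hV, hV1⟩ := hT
  intro X
  simp_rw [hV, trace_sum, trace_mul_cycle _ X, ← trace_sum, ← Finset.sum_mul, hV1, Matrix.one_mul]

lemma IsChannel.map_conjTranspose (hT : IsChannel T) (X : Mn n) : T Xᴴ = (T X)ᴴ := by
  obtain ⟨k, V, hV, -⟩ := hT
  simp [hV, conjTranspose_sum, Matrix.mul_assoc]

lemma IsPosMap.apply_eq_self_of_apply_sub_eq_self (hpos : IsPosMap T)
    (htp : IsTracePreserving T) {p q Q : Mn n} (hp : p.PosSemidef) (hq : q.PosSemidef)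
    (hQ : Q.IsHermitian) (hQQ : Q * Q = Q) (hQp : Q * p = p) (hQq : Q * q = 0)
    (hfix : T (p - q) = p - q) : T p = p := by
  have hpQ : p * Q = p := by simpa [hQ.eq, hp.1.eq] using congrArg conjTranspose hQp
  have hqQ : q * Q = 0 := by simpa [hQ.eq, hq.1.eq] using congrArg conjTranspose hQq
  have hR : (1 - Q).IsHermitian := isHermitian_one.sub hQ
  have hcompress : Q * T p * Q - Q * T q * Q = p := by
    rw [← Matrix.sub_mul, ← Matrix.mul_sub, ← map_sub, hfix, Matrix.mul_sub, Matrix.sub_mul,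
      hQp, hQq, Matrix.zero_mul, sub_zero, hpQ]
  have hq' : (Q * T q * Q).PosSemidef := by
    have h := (hpos q hq).mul_mul_conjTranspose_same Q
    rwa [hQ.eq] at h
  have hp' : ((1 - Q) * T p * (1 - Q)).PosSemidef := by
    have h := (hpos p hp).mul_mul_conjTranspose_same (1 - Q)
    rwa [hR.eq] at h
  -- `tr (T p) = tr p` forces both positive compressions below to vanish
  have htrace : (Q * T q * Q).trace + ((1 - Q) * T p * (1 - Q)).trace = 0 := by
    have hsplit := trace_eq_trace_mul_mul_add_trace_mul_mul (A := T p) hQQ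
    have hcompress_tr := congrArg trace hcompress
    rw [trace_sub] at hcompress_tr
    rw [htp] at hsplit
    linear_combination -hsplit - hcompress_tr
  obtain ⟨hq0, hp0⟩ := (add_eq_zero_iff_of_nonneg hq'.trace_nonneg hp'.trace_nonneg).mp htrace
  have hTpR : T p * (1 - Q) = 0 :=
    (hpos p hp).mul_eq_zero_of_conjTranspose_mul_mul_eq_zero
      (by rw [hR.eq]; exact hp'.trace_eq_zero_iff.mp hp0)
  have hRTp : (1 - Q) * T p = 0 := by
    simpa [hR.eq, (hpos p hp).1.eq] using congrArg conjTranspose hTpR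
  have hTpQ : T p * Q = T p := by
    rw [Matrix.mul_sub, Matrix.mul_one, sub_eq_zero] at hTpR; exact hTpR.symm
  have hQTp : Q * T p = T p := by
    rw [Matrix.sub_mul, Matrix.one_mul, sub_eq_zero] at hRTp; exact hRTp.symm
  rwa [hq'.trace_eq_zero_iff.mp hq0, sub_zero, hQTp, hTpQ] at hcompress

lemma IsChannel.exists_projection_fixed_posSemidef (hT : IsChannel T) {δ : Mn n}
    (hδ : δ.IsHermitian) (hfix : T δ = δ) :
    ∃ Q : Mn n, (Q * δ).PosSemidef ∧ (Q * δ - δ).PosSemidef ∧ Q * (Q * δ) = Q * δ ∧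
      T (Q * δ) = Q * δ ∧ T (Q * δ - δ) = Q * δ - δ := by
  obtain ⟨Q, hQ, hQQ, hp, hq⟩ := hδ.exists_projection_posSemidef_mul
  have hQp : Q * (Q * δ) = Q * δ := by rw [← Matrix.mul_assoc, hQQ]
  have hQq : Q * (Q * δ - δ) = 0 := by rw [Matrix.mul_sub, hQp, sub_self]
  have hTp : T (Q * δ) = Q * δ :=
    hT.isPosMap_s10.apply_eq_self_of_apply_sub_eq_self hT.isTracePreserving_s10 hp hq hQ hQQ hQp hQq
      (by rwa [sub_sub_cancel])
  exact ⟨Q, hp, hq, hQp, hTp, by rw [map_sub, hTp, hfix]⟩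

lemma IsChannel.reduces_of_support (hT : IsChannel T) {ρ P S : Mn n} (hρ : ρ.PosSemidef)
    (hfix : T ρ = ρ) (hP : P.IsHermitian) (hρP : ρ * P = ρ) (hPS : P = S * ρ) :
    ∀ X, ∃ Y, T (P * X * P) = P * Y * P := by
  obtain ⟨k, V, hV, -⟩ := hT
  have hR : (1 - P).IsHermitian := isHermitian_one.sub hP
  have hρR : ρ * (1 - P) = 0 := by rw [Matrix.mul_sub, Matrix.mul_one, hρP, sub_self]
  -- compressing `ρ = ∑ Vᵢ ρ Vᵢᴴ` to the kernel of `ρ` kills every summand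
  have hsum : ∑ i, ((V i)ᴴ * (1 - P))ᴴ * ρ * ((V i)ᴴ * (1 - P)) = 0 := by
    calc ∑ i, ((V i)ᴴ * (1 - P))ᴴ * ρ * ((V i)ᴴ * (1 - P))
        = (1 - P) * T ρ * (1 - P) := by
          simp only [hV, conjTranspose_mul, conjTranspose_conjTranspose, hR.eq, Finset.mul_sum,
            Finset.sum_mul, Matrix.mul_assoc]
      _ = 0 := by rw [hfix, Matrix.mul_assoc, hρR, Matrix.mul_zero]
  have hkernel (i : Fin k) : ρ * ((V i)ᴴ * (1 - P)) = 0 :=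
    hρ.mul_eq_zero_of_conjTranspose_mul_mul_eq_zero <|
      (Finset.sum_eq_zero_iff_of_nonneg fun j _ => (hρ.conjTranspose_mul_mul_same _).nonneg).mp
        hsum i (Finset.mem_univ i)
  have hPVR (i : Fin k) : P * (V i)ᴴ * (1 - P) = 0 := by
    calc P * (V i)ᴴ * (1 - P) = S * (ρ * ((V i)ᴴ * (1 - P))) := by
          nth_rw 1 [hPS]
          simp only [Matrix.mul_assoc]
      _ = 0 := by rw [hkernel i, Matrix.mul_zero]
  have hPV (i : Fin k) : P * (V i)ᴴ = P * (V i)ᴴ * P := by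
    have h := hPVR i
    rwa [Matrix.mul_sub, Matrix.mul_one, sub_eq_zero] at h
  have hVP (i : Fin k) : V i * P = P * V i * P := by
    have h := congrArg conjTranspose (hPV i)
    simpa only [conjTranspose_mul, conjTranspose_conjTranspose, hP.eq, Matrix.mul_assoc] using h
  intro X
  refine ⟨T (P * X * P), ?_⟩
  have hterm (i : Fin k) : V i * (P * X * P) * (V i)ᴴ = P * (V i * (P * X * P) * (V i)ᴴ) * P := by
    calc V i * (P * X * P) * (V i)ᴴ = (V i * P) * X * (P * (V i)ᴴ) := by
          simp only [Matrix.mul_assoc]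
      _ = (P * V i * P) * X * (P * (V i)ᴴ * P) := by rw [← hVP i, ← hPV i]
      _ = P * (V i * (P * X * P) * (V i)ᴴ) * P := by simp only [Matrix.mul_assoc]
  rw [hV, Finset.mul_sum, Finset.sum_mul]
  exact Finset.sum_congr rfl fun i _ => hterm i

lemma IsChannel.posDef_of_isIrreducibleMap (hT : IsChannel T) (hirr : IsIrreducibleMap T)
    {ρ : Mn n} (hρ : ρ.PosSemidef) (hfix : T ρ = ρ) (hρ0 : ρ ≠ 0) : ρ.PosDef := by
  obtain ⟨P, S, hP, hPP, hρP, hPS⟩ := hρ.isHermitian.exists_support_projection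
  rcases hirr P hP hPP (hT.reduces_of_support hρ hfix hP hρP hPS) with rfl | rfl
  · exact absurd (by rw [← hρP, Matrix.mul_zero]) hρ0
  · exact hρ.posDef_iff_isUnit.mpr (IsUnit.of_mul_eq_one_right S hPS.symm)

lemma IsChannel.eq_of_isIrreducibleMap (hT : IsChannel T) (hirr : IsIrreducibleMap T)
    {σ π : Mn n} (hσ : σ.PosSemidef) (hσ1 : σ.trace = 1) (hσfix : T σ = σ)
    (hπ : π.PosSemidef) (hπ1 : π.trace = 1) (hπfix : T π = π) : σ = π := by
  obtain ⟨Q, hp, hq, hQp, hpfix, hqfix⟩ := hT.exists_projection_fixed_posSemidef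
    (hσ.isHermitian.sub hπ.isHermitian) (by rw [map_sub, hσfix, hπfix])
  set δ := σ - π
  have htrace : (Q * δ).trace = (Q * δ - δ).trace := by
    rw [trace_sub, trace_sub (A := σ), hσ1, hπ1, sub_self, sub_zero]
  -- a nonzero positive part is invertible, so `Q = 1` and the negative part vanishes
  have hp0 : Q * δ = 0 := by
    by_contra hp0
    have hQ1 : Q = 1 := (hT.posDef_of_isIrreducibleMap hirr hp hpfix hp0).isUnit.mul_right_cancel
      (by rw [hQp, Matrix.one_mul])
    rw [hQ1, Matrix.one_mul] at hp htrace hp0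
    rw [sub_self, trace_zero, hp.trace_eq_zero_iff] at htrace
    exact hp0 htrace
  have hq0 : Q * δ - δ = 0 := by rw [← hq.trace_eq_zero_iff, ← htrace, hp0, trace_zero]
  rw [hp0, zero_sub, neg_eq_zero, sub_eq_zero] at hq0
  exact hq0

-- A real subspace, so that the fixed point found in it by the trace argument is Hermitian.
def hermitianCorner (P : Mn n) : Submodule ℝ (Mn n) where
  carrier := {X | X.IsHermitian ∧ P * X * P = X}
  add_mem' := by
    rintro X Y ⟨hX, hPX⟩ ⟨hY, hPY⟩
    exact ⟨hX.add hY, by rw [Matrix.mul_add, Matrix.add_mul, hPX, hPY]⟩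
  zero_mem' := ⟨isHermitian_zero, by rw [Matrix.mul_zero, Matrix.zero_mul]⟩
  smul_mem' := by
    rintro c X ⟨hX, hPX⟩
    exact ⟨(IsSelfAdjoint.all c).smul hX, by rw [Matrix.mul_smul, Matrix.smul_mul, hPX]⟩

lemma IsChannel.exists_fixed_isHermitian_of_reduces (hT : IsChannel T) {P : Mn n}
    (hP : P.IsHermitian) (hPP : P * P = P) (hred : ∀ X, ∃ Y, T (P * X * P) = P * Y * P)
    (hP0 : P ≠ 0) : ∃ δ : Mn n, δ.IsHermitian ∧ δ * P = δ ∧ δ ≠ 0 ∧ T δ = δ := by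
  have hmaps : ∀ X ∈ hermitianCorner P, T.restrictScalars ℝ X ∈ hermitianCorner P := by
    rintro X ⟨hX, hPX⟩
    obtain ⟨Y, hY⟩ := hred X
    refine ⟨?_, ?_⟩
    · rw [LinearMap.restrictScalars_apply, IsHermitian, ← hT.map_conjTranspose, hX.eq]
    · rw [LinearMap.restrictScalars_apply, ← hPX, hY]
      simp only [← Matrix.mul_assoc, hPP]
      simp only [Matrix.mul_assoc, hPP]
  set φ : hermitianCorner P →ₗ[ℝ] ℝ :=
    Complex.reLm ∘ₗ (traceLinearMap (Fin n) ℂ ℂ).restrictScalars ℝ ∘ₗ (hermitianCorner P).subtype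
  have hφ : φ ∘ₗ (T.restrictScalars ℝ).restrict hmaps = φ := by
    ext X
    simp [φ, hT.isTracePreserving_s10 X]
  have hPmem : P ∈ hermitianCorner P := ⟨hP, by rw [hPP, hPP]⟩
  have hφ0 : φ ≠ 0 := by
    intro h
    have hPre : (P.trace).re = 0 := by simpa [φ] using congrArg (· ⟨P, hPmem⟩) h
    have hPpsd : P.PosSemidef := by
      simpa [hP.eq, hPP] using posSemidef_conjTranspose_mul_self P
    refine hP0 (hPpsd.trace_eq_zero_iff.mp (Complex.ext hPre ?_))
    exact (Complex.nonneg_iff.mp hPpsd.trace_nonneg).2.symm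
  obtain ⟨⟨δ, hδ, hPδ⟩, hδ0, hfix⟩ := Module.End.exists_ne_zero_apply_eq_self _ φ hφ hφ0
  refine ⟨δ, hδ, ?_, fun h => hδ0 (Subtype.ext h), congrArg Subtype.val hfix⟩
  rw [← hPδ, Matrix.mul_assoc, hPP]

lemma IsChannel.exists_fixed_state_of_reduces (hT : IsChannel T) {P : Mn n}
    (hP : P.IsHermitian) (hPP : P * P = P) (hred : ∀ X, ∃ Y, T (P * X * P) = P * Y * P)
    (hP0 : P ≠ 0) : ∃ ρ : Mn n, ρ.PosSemidef ∧ ρ.trace = 1 ∧ T ρ = ρ ∧ ρ * P = ρ := by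
  obtain ⟨δ, hδ, hδP, hδ0, hδfix⟩ := hT.exists_fixed_isHermitian_of_reduces hP hPP hred hP0
  obtain ⟨Q, hp, hq, -, hpfix, hqfix⟩ := hT.exists_projection_fixed_posSemidef hδ hδfix
  obtain ⟨r, hr, hrfix, hrP, hr0⟩ : ∃ r : Mn n, r.PosSemidef ∧ T r = r ∧ r * P = r ∧ r ≠ 0 := by
    by_cases hp0 : Q * δ = 0
    · refine ⟨Q * δ - δ, hq, hqfix, ?_, ?_⟩
      · rw [Matrix.sub_mul, Matrix.mul_assoc, hδP]
      · rwa [hp0, zero_sub, neg_ne_zero]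
    · exact ⟨Q * δ, hp, hpfix, by rw [Matrix.mul_assoc, hδP], hp0⟩
  have htr : r.trace ≠ 0 := fun h => hr0 (hr.trace_eq_zero_iff.mp h)
  exact ⟨r.trace⁻¹ • r, hr.smul (inv_nonneg_of_nonneg hr.trace_nonneg),
    by rw [trace_smul, smul_eq_mul, inv_mul_cancel₀ htr], by rw [map_smul, hrfix],
    by rw [Matrix.smul_mul, hrP]⟩

end Channel

/-- (Carbone–Pautrat) Let `T` be a completely positive trace-preserving map
on `M_n`. (1) If `T` is irreducible and `π` is an invariant state, then `π` is the unique
invariant state and is faithful (positive definite). (2) Conversely, if `T` has a unique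
invariant state and it is positive definite, then `T` is irreducible. -/
theorem stmt10 {n : ℕ} (T : Module.End ℂ (Mn n)) (hchan : IsChannel T) :
    (∀ π : Mn n, π.PosSemidef → π.trace = 1 → T π = π → IsIrreducibleMap T →
      π.PosDef ∧ ∀ σ : Mn n, σ.PosSemidef → σ.trace = 1 → T σ = σ → σ = π) ∧
    (∀ π : Mn n, π.PosSemidef → π.trace = 1 → T π = π → π.PosDef →
      (∀ σ : Mn n, σ.PosSemidef → σ.trace = 1 → T σ = σ → σ = π) →
      IsIrreducibleMap T) := by
  refine ⟨fun π hπ hπ1 hπfix hirr => ⟨?_, fun σ hσ hσ1 hσfix => ?_⟩, ?_⟩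
  · refine hchan.posDef_of_isIrreducibleMap hirr hπ hπfix fun h => ?_
    simp [h] at hπ1
  · exact hchan.eq_of_isIrreducibleMap hirr hσ hσ1 hσfix hπ hπ1 hπfix
  · intro π hπ hπ1 hπfix hπpd huniq P hP hPP hred
    by_cases hP0 : P = 0
    · exact Or.inl hP0
    obtain ⟨ρ, hρ, hρ1, hρfix, hρP⟩ := hchan.exists_fixed_state_of_reduces hP hPP hred hP0
    rw [huniq ρ hρ hρ1 hρfix] at hρP
    exact Or.inr (hπpd.isUnit.mul_left_cancel (by rw [hρP, Matrix.mul_one])).symm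
end
end

section
/- Let F, B, C be complex matrices of compatible sizes (F of size m×n, B of size p×q, C of size m×q) and let F⁻, B⁻ be any generalized inverses of F and B. Then the matrix equation FXB = C has a solution X (of size n×p) if and only if F F⁻ C B⁻ B = C. In that case, a matrix X satisfies FXB = C if and only if X = F⁻CB⁻ + (I − F⁻F)U + V(I − B⁻B) for some matrices U and V of size n×p. -/
open Matrix

noncomputable section

/-- (Rao/Hunter) Let `F`, `B`, `C` be complex matrices of compatible sizes
and `F⁻`, `B⁻` generalized inverses of `F` and `B`. The equation `FXB = C` has a solution
iff `F F⁻ C B⁻ B = C`, in which case `X` is a solution iff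
`X = F⁻CB⁻ + (I − F⁻F)U + V(I − BB⁻)` for some `U`, `V`. -/
theorem stmt11 {m n p q : ℕ}
    (F : Matrix (Fin m) (Fin n) ℂ) (B : Matrix (Fin p) (Fin q) ℂ)
    (C : Matrix (Fin m) (Fin q) ℂ)
    (Fi : Matrix (Fin n) (Fin m) ℂ) (hFi : F * Fi * F = F)
    (Bi : Matrix (Fin q) (Fin p) ℂ) (hBi : B * Bi * B = B) :
    ((∃ X : Matrix (Fin n) (Fin p) ℂ, F * X * B = C) ↔ F * Fi * C * Bi * B = C) ∧
    (F * Fi * C * Bi * B = C →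
      ∀ X : Matrix (Fin n) (Fin p) ℂ,
        F * X * B = C ↔
          ∃ U V : Matrix (Fin n) (Fin p) ℂ,
            X = Fi * C * Bi + (1 - Fi * F) * U + V * (1 - B * Bi)) := by
  have hFi' : F * (Fi * F) = F := by rw [← Matrix.mul_assoc]; exact hFi
  have hBi' : B * (Bi * B) = B := by rw [← Matrix.mul_assoc]; exact hBi
  constructor
  · constructor
    · rintro ⟨X, rfl⟩
      calc F * Fi * (F * X * B) * Bi * B
          = F * (Fi * F) * (X * (B * (Bi * B))) := by
            simp only [Matrix.mul_assoc]
        _ = F * X * B := by rw [hFi', hBi']; simp only [Matrix.mul_assoc]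
    · intro h
      exact ⟨Fi * C * Bi, by
        calc F * (Fi * C * Bi) * B = F * Fi * C * Bi * B := by
              simp only [Matrix.mul_assoc]
          _ = C := h⟩
  · intro h X
    constructor
    · intro hX
      refine ⟨X, Fi * F * X, ?_⟩
      have key : Fi * F * X * (B * Bi) = Fi * C * Bi := by
        calc Fi * F * X * (B * Bi) = Fi * (F * X * B) * Bi := by
              simp only [Matrix.mul_assoc]
          _ = Fi * C * Bi := by rw [hX]
      calc X = Fi * C * Bi + (X - Fi * F * X) + (Fi * F * X - Fi * F * X * (B * Bi)) := by
              rw [key]; abel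
        _ = Fi * C * Bi + (1 - Fi * F) * X + Fi * F * X * (1 - B * Bi) := by
              simp only [Matrix.sub_mul, Matrix.mul_sub, Matrix.one_mul, Matrix.mul_one]
    · rintro ⟨U, V, rfl⟩
      have h1 : F * ((1 - Fi * F) * U) = 0 := by
        rw [← Matrix.mul_assoc, Matrix.mul_sub, Matrix.mul_one, hFi', sub_self, Matrix.zero_mul]
      have h2 : V * (1 - B * Bi) * B = 0 := by
        rw [Matrix.mul_assoc, Matrix.sub_mul, Matrix.one_mul, Matrix.mul_assoc B, hBi',
          sub_self, Matrix.mul_zero]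
      calc F * (Fi * C * Bi + (1 - Fi * F) * U + V * (1 - B * Bi)) * B
          = (F * (Fi * C * Bi) + F * ((1 - Fi * F) * U) + F * (V * (1 - B * Bi))) * B := by
            rw [Matrix.mul_add, Matrix.mul_add]
        _ = F * (Fi * C * Bi) * B + F * ((1 - Fi * F) * U) * B
            + F * (V * (1 - B * Bi) * B) := by
            simp only [Matrix.add_mul, Matrix.mul_assoc]
        _ = C := by
            rw [h1, h2, Matrix.zero_mul, Matrix.mul_zero, add_zero, add_zero]
            calc F * (Fi * C * Bi) * B = F * Fi * C * Bi * B := by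
                  simp only [Matrix.mul_assoc]
              _ = C := h
end
end

section
/- Let M ∈ M_N(ℂ) and suppose there exist vectors π, e ∈ ℂ^N with Mπ = π, M*e = e, ⟨e, π⟩ = 1, and such that 1 is a simple eigenvalue of M (ker(M − I) is one-dimensional and ker((M − I)²) = ker(M − I)). Let t, u ∈ ℂ^N with ⟨e, t⟩ ≠ 0 and ⟨u, π⟩ ≠ 0. Then I − M + t u* is invertible, and a matrix G ∈ M_N(ℂ) is a generalized inverse of I − M if and only if G = (I − M + t u*)^{−1} + π f* + g e* for some vectors f, g ∈ ℂ^N. -/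
open Matrix

/-! Write `B = 1 - M` and `A = B + t u*`. If `A v = 0`, pairing with `e` (where `e* B = 0`) gives
`u* v = 0`, so `B v = 0`, `v ∈ ℂ π`, and `u* π ≠ 0` forces `v = 0`: `A` is invertible.
From `A π = (u* π) t` and `e* A = (e* t) u*` one gets `A⁻¹ B = 1 - π u* / (u* π)` and
`B A⁻¹ = 1 - t e* / (e* t)`; the latter gives `B A⁻¹ B = B`. So `G` is a g-inverse iff
`D = G - A⁻¹` satisfies `B D B = 0`, and then with `P = A⁻¹ B`, `Q = B A⁻¹` we have
`P D Q = A⁻¹ (B D B) A⁻¹ = 0`, whence `D = (1 - P) D + P D (1 - Q) = π f* + g e*`. -/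

namespace Matrix

variable {K n : Type*} [Field K] [Fintype n] [DecidableEq n]
  {B : Matrix n n K} {p q t w : n → K}

theorem isUnit_add_vecMulVec (hker : ∀ v, B *ᵥ v = 0 → ∃ c : K, v = c • p)
    (hqB : q ᵥ* B = 0) (ht : q ⬝ᵥ t ≠ 0) (hw : w ⬝ᵥ p ≠ 0) :
    IsUnit (B + vecMulVec t w) := by
  rw [isUnit_iff_isUnit_det, isUnit_iff_ne_zero, ne_eq, ← exists_mulVec_eq_zero_iff]
  rintro ⟨v, hv0, hv⟩
  rw [add_mulVec, vecMulVec_mulVec, op_smul_eq_smul] at hv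
  have hwv : w ⬝ᵥ v = 0 := by
    have := congrArg (q ⬝ᵥ ·) hv
    simp only [dotProduct_add, dotProduct_mulVec, hqB, zero_dotProduct, dotProduct_smul,
      smul_eq_mul, zero_add, dotProduct_zero] at this
    exact (mul_eq_zero.mp this).resolve_right ht
  rw [hwv, zero_smul, add_zero] at hv
  obtain ⟨c, rfl⟩ := hker v hv
  rw [dotProduct_smul, smul_eq_mul, mul_eq_zero] at hwv
  exact hv0 (by rw [hwv.resolve_right hw, zero_smul])

theorem inv_add_vecMulVec_mul (hA : IsUnit (B + vecMulVec t w)) (hBp : B *ᵥ p = 0)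
    (hw : w ⬝ᵥ p ≠ 0) :
    (B + vecMulVec t w)⁻¹ * B = 1 - (w ⬝ᵥ p)⁻¹ • vecMulVec p w := by
  have hdet := (isUnit_iff_isUnit_det _).mp hA
  have hinv_t : (B + vecMulVec t w)⁻¹ *ᵥ t = (w ⬝ᵥ p)⁻¹ • p := by
    have hAp : (B + vecMulVec t w) *ᵥ p = (w ⬝ᵥ p) • t := by
      rw [add_mulVec, hBp, zero_add, vecMulVec_mulVec, op_smul_eq_smul]
    rw [eq_inv_smul_iff₀ hw, ← mulVec_smul, ← hAp, mulVec_mulVec, nonsing_inv_mul _ hdet,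
      one_mulVec]
  calc (B + vecMulVec t w)⁻¹ * B
      = (B + vecMulVec t w)⁻¹ * (B + vecMulVec t w)
          - (B + vecMulVec t w)⁻¹ * vecMulVec t w := by
        rw [← Matrix.mul_sub, add_sub_cancel_right]
    _ = 1 - (w ⬝ᵥ p)⁻¹ • vecMulVec p w := by
        rw [nonsing_inv_mul _ hdet, mul_vecMulVec, hinv_t, smul_vecMulVec]

theorem mul_inv_add_vecMulVec (hA : IsUnit (B + vecMulVec t w)) (hqB : q ᵥ* B = 0)
    (ht : q ⬝ᵥ t ≠ 0) :
    B * (B + vecMulVec t w)⁻¹ = 1 - (q ⬝ᵥ t)⁻¹ • vecMulVec t q := by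
  have hdet := (isUnit_iff_isUnit_det _).mp hA
  have hw_inv : w ᵥ* (B + vecMulVec t w)⁻¹ = (q ⬝ᵥ t)⁻¹ • q := by
    have hqA : q ᵥ* (B + vecMulVec t w) = (q ⬝ᵥ t) • w := by
      rw [vecMul_add, hqB, zero_add, vecMul_vecMulVec]
    rw [eq_inv_smul_iff₀ ht, ← smul_vecMul, ← hqA, vecMul_vecMul, mul_nonsing_inv _ hdet,
      vecMul_one]
  calc B * (B + vecMulVec t w)⁻¹
      = (B + vecMulVec t w) * (B + vecMulVec t w)⁻¹
          - vecMulVec t w * (B + vecMulVec t w)⁻¹ := by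
        rw [← Matrix.sub_mul, add_sub_cancel_right]
    _ = 1 - (q ⬝ᵥ t)⁻¹ • vecMulVec t q := by
        rw [mul_nonsing_inv _ hdet, vecMulVec_mul, hw_inv, vecMulVec_smul]

theorem mul_inv_add_vecMulVec_mul_self (hA : IsUnit (B + vecMulVec t w)) (hqB : q ᵥ* B = 0)
    (ht : q ⬝ᵥ t ≠ 0) : B * (B + vecMulVec t w)⁻¹ * B = B := by
  rw [mul_inv_add_vecMulVec hA hqB ht, Matrix.sub_mul, Matrix.one_mul, Matrix.smul_mul,
    vecMulVec_mul, hqB, vecMulVec_zero, smul_zero, sub_zero]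

theorem mul_mul_eq_zero_iff (hA : IsUnit (B + vecMulVec t w)) (hBp : B *ᵥ p = 0)
    (hqB : q ᵥ* B = 0) (ht : q ⬝ᵥ t ≠ 0) (hw : w ⬝ᵥ p ≠ 0) {D : Matrix n n K} :
    B * D * B = 0 ↔ ∃ f g : n → K, D = vecMulVec p f + vecMulVec g q := by
  constructor
  · intro hD
    set P := (B + vecMulVec t w)⁻¹ * B with hP
    set Q := B * (B + vecMulVec t w)⁻¹ with hQ
    have hPDQ : P * D * Q = 0 := by
      rw [hP, hQ, show (B + vecMulVec t w)⁻¹ * B * D * (B * (B + vecMulVec t w)⁻¹)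
        = (B + vecMulVec t w)⁻¹ * (B * D * B) * (B + vecMulVec t w)⁻¹ by noncomm_ring,
        hD, Matrix.mul_zero, Matrix.zero_mul]
    have hsplit : D = (1 - P) * D + P * D * (1 - Q) + P * D * Q := by noncomm_ring
    refine ⟨(w ⬝ᵥ p)⁻¹ • (w ᵥ* D), (q ⬝ᵥ t)⁻¹ • ((P * D) *ᵥ t), ?_⟩
    have h1P : 1 - P = (w ⬝ᵥ p)⁻¹ • vecMulVec p w := by
      rw [hP, inv_add_vecMulVec_mul hA hBp hw, sub_sub_cancel]
    have h1Q : 1 - Q = (q ⬝ᵥ t)⁻¹ • vecMulVec t q := by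
      rw [hQ, mul_inv_add_vecMulVec hA hqB ht, sub_sub_cancel]
    conv_lhs => rw [hsplit]
    rw [hPDQ, add_zero, h1P, h1Q, Matrix.smul_mul, vecMulVec_mul, Matrix.mul_smul,
      mul_vecMulVec, vecMulVec_smul, smul_vecMulVec]
  · rintro ⟨f, g, rfl⟩
    rw [Matrix.mul_add, Matrix.add_mul, mul_vecMulVec, hBp, zero_vecMulVec, Matrix.zero_mul,
      zero_add, Matrix.mul_assoc, vecMulVec_mul, hqB, vecMulVec_zero, Matrix.mul_zero]

theorem mul_mul_eq_self_iff (hA : IsUnit (B + vecMulVec t w)) (hBp : B *ᵥ p = 0)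
    (hqB : q ᵥ* B = 0) (ht : q ⬝ᵥ t ≠ 0) (hw : w ⬝ᵥ p ≠ 0) {G : Matrix n n K} :
    B * G * B = B ↔
      ∃ f g : n → K, G = (B + vecMulVec t w)⁻¹ + vecMulVec p f + vecMulVec g q := by
  have hdiff : B * (G - (B + vecMulVec t w)⁻¹) * B = B * G * B - B := by
    rw [Matrix.mul_sub, Matrix.sub_mul, mul_inv_add_vecMulVec_mul_self hA hqB ht]
  rw [← sub_eq_zero, ← hdiff, mul_mul_eq_zero_iff hA hBp hqB ht hw]
  simp only [sub_eq_iff_eq_add', add_assoc]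

end Matrix

theorem stmt15_general {N : ℕ} (M : Matrix (Fin N) (Fin N) ℂ)
    (π e : Fin N → ℂ)
    (hπ : M.mulVec π = π) (he : Mᴴ.mulVec e = e)
    (hker : ∀ v : Fin N → ℂ, (M - 1).mulVec v = 0 → ∃ c : ℂ, v = c • π)
    (t u : Fin N → ℂ) (ht : star e ⬝ᵥ t ≠ 0) (hu : star u ⬝ᵥ π ≠ 0) :
    IsUnit (1 - M + Matrix.vecMulVec t (star u)) ∧
    ∀ G : Matrix (Fin N) (Fin N) ℂ,
      (1 - M) * G * (1 - M) = 1 - M ↔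
        ∃ f g : Fin N → ℂ,
          G = (1 - M + Matrix.vecMulVec t (star u))⁻¹
              + Matrix.vecMulVec π (star f) + Matrix.vecMulVec g (star e) := by
  have hBπ : (1 - M) *ᵥ π = 0 := by rw [sub_mulVec, one_mulVec, hπ, sub_self]
  have heB : star e ᵥ* (1 - M) = 0 := by
    have heM := congrArg star he
    rw [star_mulVec, conjTranspose_conjTranspose] at heM
    rw [vecMul_sub, vecMul_one, heM, sub_self]
  have hkerB (v : Fin N → ℂ) (hv : (1 - M) *ᵥ v = 0) : ∃ c : ℂ, v = c • π :=
    hker v (by rw [← neg_sub, neg_mulVec, hv, neg_zero])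
  have hA := isUnit_add_vecMulVec hkerB heB ht hu
  refine ⟨hA, fun G => ?_⟩
  rw [mul_mul_eq_self_iff hA hBπ heB ht hu, star_involutive.surjective.exists]

/-- (Hunter-type characterization of generalized inverses) Let
`M ∈ M_N(ℂ)` with `Mπ = π`, `M*e = e`, `⟨e,π⟩ = 1`, and with `1` a simple eigenvalue of
`M`. For `t, u` with `⟨e,t⟩ ≠ 0` and `⟨u,π⟩ ≠ 0`, the matrix `I − M + tu*` is invertible
and `G` is a generalized inverse of `I − M` iff `G = (I − M + tu*)^{−1} + πf* + ge*` for
some vectors `f`, `g`. -/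
theorem stmt15 {N : ℕ} (M : Matrix (Fin N) (Fin N) ℂ)
    (π e : Fin N → ℂ)
    (hπ : M.mulVec π = π) (he : Mᴴ.mulVec e = e)
    (heπ : star e ⬝ᵥ π = 1)
    (hker : ∀ v : Fin N → ℂ, (M - 1).mulVec v = 0 → ∃ c : ℂ, v = c • π)
    (hsimple : ∀ v : Fin N → ℂ,
      ((M - 1) * (M - 1)).mulVec v = 0 → (M - 1).mulVec v = 0)
    (t u : Fin N → ℂ) (ht : star e ⬝ᵥ t ≠ 0) (hu : star u ⬝ᵥ π ≠ 0) :
    IsUnit (1 - M + Matrix.vecMulVec t (star u)) ∧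
    ∀ G : Matrix (Fin N) (Fin N) ℂ,
      (1 - M) * G * (1 - M) = 1 - M ↔
        ∃ f g : Fin N → ℂ,
          G = (1 - M + Matrix.vecMulVec t (star u))⁻¹
              + Matrix.vecMulVec π (star f) + Matrix.vecMulVec g (star e) :=
  stmt15_general M π e hπ he hker t u ht hu
end
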